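/- arXiv:1106.0593 — 2 statements merged into one kernel-verified Lean document; each statement's English description precedes it below -/
import Mathlib

section
/- Suppose the generating functions U_n satisfy the linear equation λ(U_{n+1} − U_n) = r_{n+1}(U_{n+2} + U_{n+1}) − r_n(U_n + U_{n−1}) for all n ≥ 0, together with r₀ = 0 and U₀ = 1. Then the quadratic equation r_n(U_n + U_{n−1})(U_n + U_{n+1}) = λ(U_n² − 1) holds for all n ≥ 0. -/
/-- If the generating functions `U_n` satisfy the linear equation
`λ(U_{n+1} − U_n) = r_{n+1}(U_{n+2} + U_{n+1}) − r_n(U_n + U_{n−1})` for all `n ≥ 0`,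
together with `r₀ = 0` and `U₀ = 1`, then the quadratic equation
`r_n(U_n + U_{n−1})(U_n + U_{n+1}) = λ(U_n² − 1)` holds for all `n ≥ 0`. -/
theorem quadratic_string_identity {R : Type*} [CommRing R] (lam : R) (r U : ℕ → R)
    (hr0 : r 0 = 0) (hU0 : U 0 = 1)
    (hlin : ∀ n : ℕ,
      lam * (U (n + 1) - U n) = r (n + 1) * (U (n + 2) + U (n + 1)) - r n * (U n + U (n - 1))) :
    ∀ n : ℕ, r n * (U n + U (n - 1)) * (U n + U (n + 1)) = lam * ((U n) ^ 2 - 1) := by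
  intro n
  induction n with
  | zero => simp [hr0, hU0]
  | succ n ih =>
    have h := hlin n
    have h2 : lam * (U (n + 1) - U n) * (U (n + 1) + U n) =
        (r (n + 1) * (U (n + 2) + U (n + 1)) - r n * (U n + U (n - 1))) * (U (n + 1) + U n) := by
      rw [h]
    simp only [Nat.add_sub_cancel]
    linear_combination (-(U (n + 1) + U n)) * h + ih
end

section
/- The function F(σ,τ) = (1/2πi)∮_γ V_λ(λ)√((λ−σ)(λ−τ)) dλ + (T/2)(σ+τ), with V a polynomial, satisfies the Euler–Poisson–Darboux equation 2(τ−σ) ∂²F/∂σ∂τ = ∂F/∂σ − ∂F/∂τ. -/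
/-- Coefficients of the binomial series `√(1−x) = Σ_j sqrtCoeff j · x^j`:
`sqrtCoeff j = C(2j,j)/((1−2j)·4^j)`. -/
noncomputable def sqrtCoeff (j : ℕ) : ℝ :=
  (Nat.choose (2 * j) j : ℝ) / ((1 - 2 * (j : ℝ)) * 4 ^ j)

/-- The polynomial part of `F(σ,τ) = (1/2πi)∮ V_λ(λ)√((λ−σ)(λ−τ))dλ + (T/2)(σ+τ)` for
`V(λ) = Σ_{m=1}^d g_m λ^m`: since
`√((λ−σ)(λ−τ)) = λ Σ_{j,k} sqrtCoeff j · sqrtCoeff k · σ^j τ^k λ^{-j-k}`, the residue at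
infinity of `V_λ √((λ−σ)(λ−τ))` is `Σ_m m g_m Σ_{j+k=m+1} sqrtCoeff j sqrtCoeff k σ^j τ^k`. -/
noncomputable def EPDF (d : ℕ) (g : ℕ → ℝ) (T : ℝ) (σ τ : ℝ) : ℝ :=
  (∑ m ∈ Finset.Icc 1 d, (m : ℝ) * g m *
      ∑ j ∈ Finset.range (m + 2), sqrtCoeff j * sqrtCoeff (m + 1 - j) * σ ^ j * τ ^ (m + 1 - j))
    + T / 2 * (σ + τ)

/-!
The residue at infinity turns `F` into a linear combination of the blocks
`sqrtBlock n σ τ = Σ_{j+k=n} a_j a_k σ^j τ^k` (`a = sqrtCoeff`), the coefficients of `x^n` in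
`√(1-σx)·√(1-τx)`, plus the linear term `(T/2)(σ+τ)`. The Euler–Poisson–Darboux operator is
linear and kills linear functions, so it suffices to treat one block. Comparing coefficients of
`σ^j τ^k` there reduces the equation to the symmetry of `(j+1) a_{j+1} (2k-1) a_k` in `j, k`,
which follows from the recurrence `(n+1) a_{n+1} = (n - 1/2) a_n`, i.e. from `y = √(1-x)`
solving `2(1-x) y' = -y`.
-/

open Finset

lemma one_sub_two_mul_natCast_ne_zero (n : ℕ) : (1 : ℝ) - 2 * n ≠ 0 := by
  rw [sub_ne_zero]
  exact_mod_cast (by omega : 1 ≠ 2 * n)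

lemma sqrtCoeff_succ (n : ℕ) :
    ((n : ℝ) + 1) * sqrtCoeff (n + 1) = (n - 1 / 2) * sqrtCoeff n := by
  have hc : ((n : ℝ) + 1) * ((2 * (n + 1)).choose (n + 1) : ℝ)
      = 2 * (2 * (n : ℝ) + 1) * ((2 * n).choose n : ℝ) := by
    simp only [← Nat.centralBinom_eq_two_mul_choose]
    exact_mod_cast Nat.succ_mul_centralBinom_succ n
  have h₀ := one_sub_two_mul_natCast_ne_zero n
  have h₁ := one_sub_two_mul_natCast_ne_zero (n + 1)
  unfold sqrtCoeff
  rw [mul_div_assoc', mul_div_assoc', div_eq_div_iff (mul_ne_zero h₁ (by positivity))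
    (mul_ne_zero h₀ (by positivity))]
  push_cast
  linear_combination (4 ^ n * (1 - 2 * (n : ℝ))) * hc

lemma sqrtCoeff_succ_mul_comm (j k : ℕ) :
    ((j : ℝ) + 1) * sqrtCoeff (j + 1) * ((2 * k - 1) * sqrtCoeff k)
      = ((k : ℝ) + 1) * sqrtCoeff (k + 1) * ((2 * j - 1) * sqrtCoeff j) := by
  rw [sqrtCoeff_succ, sqrtCoeff_succ]; ring

lemma natCast_mul_pow_sub_one_mul (k : ℕ) (x : ℝ) : (k : ℝ) * x ^ (k - 1) * x = k * x ^ k := by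
  rcases Nat.eq_zero_or_pos k with rfl | hk
  · simp
  · rw [mul_assoc, pow_sub_one_mul hk.ne']

def epdSolutions : Submodule ℝ (ℝ → ℝ → ℝ) where
  carrier := {F | ∃ Fσ Fτ Fστ : ℝ → ℝ → ℝ,
    (∀ σ τ, HasDerivAt (F · τ) (Fσ σ τ) σ) ∧ (∀ σ τ, HasDerivAt (F σ ·) (Fτ σ τ) τ) ∧
    (∀ σ τ, HasDerivAt (Fτ · τ) (Fστ σ τ) σ) ∧ ∀ σ τ, 2 * (τ - σ) * Fστ σ τ = Fσ σ τ - Fτ σ τ}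
  zero_mem' := ⟨0, 0, 0, fun _ _ => hasDerivAt_const _ _, fun _ _ => hasDerivAt_const _ _,
    fun _ _ => hasDerivAt_const _ _, fun _ _ => by simp⟩
  add_mem' := by
    rintro F G ⟨Fσ, Fτ, Fστ, hFσ, hFτ, hFστ, hF⟩ ⟨Gσ, Gτ, Gστ, hGσ, hGτ, hGστ, hG⟩
    refine ⟨Fσ + Gσ, Fτ + Gτ, Fστ + Gστ, fun σ τ => (hFσ σ τ).add (hGσ σ τ),
      fun σ τ => (hFτ σ τ).add (hGτ σ τ), fun σ τ => (hFστ σ τ).add (hGστ σ τ), fun σ τ => ?_⟩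
    simp only [Pi.add_apply]
    linear_combination hF σ τ + hG σ τ
  smul_mem' := by
    rintro c F ⟨Fσ, Fτ, Fστ, hFσ, hFτ, hFστ, hF⟩
    refine ⟨c • Fσ, c • Fτ, c • Fστ, fun σ τ => (hFσ σ τ).const_mul c,
      fun σ τ => (hFτ σ τ).const_mul c, fun σ τ => (hFστ σ τ).const_mul c, fun σ τ => ?_⟩
    simp only [Pi.smul_apply, smul_eq_mul]
    linear_combination c * hF σ τ

lemma epdSolutions.deriv_eq {F : ℝ → ℝ → ℝ} (hF : F ∈ epdSolutions) (σ τ : ℝ) :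
    2 * (τ - σ) * deriv (fun s => deriv (fun t => F s t) τ) σ
      = deriv (fun s => F s τ) σ - deriv (fun t => F σ t) τ := by
  obtain ⟨Fσ, Fτ, Fστ, hFσ, hFτ, hFστ, hF⟩ := hF
  have hderiv_τ : (fun s => deriv (fun t => F s t) τ) = (Fτ · τ) :=
    funext fun s => (hFτ s τ).deriv
  rw [hderiv_τ, (hFστ σ τ).deriv, (hFσ σ τ).deriv, (hFτ σ τ).deriv, hF]

lemma fun_add_mem_epdSolutions : (fun σ τ : ℝ => σ + τ) ∈ epdSolutions :=
  ⟨fun _ _ => 1, fun _ _ => 1, fun _ _ => 0, fun σ τ => (hasDerivAt_id σ).add_const τ,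
    fun σ τ => (hasDerivAt_id τ).const_add σ, fun _ _ => hasDerivAt_const _ _,
    fun _ _ => by simp⟩

noncomputable def sqrtBlock (n : ℕ) (σ τ : ℝ) : ℝ :=
  ∑ p ∈ antidiagonal n, sqrtCoeff p.1 * sqrtCoeff p.2 * σ ^ p.1 * τ ^ p.2

lemma sqrtBlock_epd (n : ℕ) (σ τ : ℝ) :
    2 * (τ - σ) * ∑ p ∈ antidiagonal n,
        sqrtCoeff p.1 * sqrtCoeff p.2 * (p.1 * σ ^ (p.1 - 1)) * (p.2 * τ ^ (p.2 - 1))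
      = ∑ p ∈ antidiagonal n, sqrtCoeff p.1 * sqrtCoeff p.2 * (p.1 * σ ^ (p.1 - 1)) * τ ^ p.2
        - ∑ p ∈ antidiagonal n,
            sqrtCoeff p.1 * sqrtCoeff p.2 * σ ^ p.1 * (p.2 * τ ^ (p.2 - 1)) := by
  have termwise : ∀ p ∈ antidiagonal n,
      2 * (τ - σ) * (sqrtCoeff p.1 * sqrtCoeff p.2 * (p.1 * σ ^ (p.1 - 1)) * (p.2 * τ ^ (p.2 - 1)))
        - (sqrtCoeff p.1 * sqrtCoeff p.2 * (p.1 * σ ^ (p.1 - 1)) * τ ^ p.2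
          - sqrtCoeff p.1 * sqrtCoeff p.2 * σ ^ p.1 * (p.2 * τ ^ (p.2 - 1)))
      = sqrtCoeff p.1 * sqrtCoeff p.2 * (p.1 * (2 * p.2 - 1)) * σ ^ (p.1 - 1) * τ ^ p.2
        - sqrtCoeff p.1 * sqrtCoeff p.2 * (p.2 * (2 * p.1 - 1)) * σ ^ p.1 * τ ^ (p.2 - 1) := by
    intro p _
    linear_combination
      (2 * sqrtCoeff p.1 * sqrtCoeff p.2 * p.1 * σ ^ (p.1 - 1)) * natCast_mul_pow_sub_one_mul p.2 τ
        - (2 * sqrtCoeff p.1 * sqrtCoeff p.2 * p.2 * τ ^ (p.2 - 1))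
          * natCast_mul_pow_sub_one_mul p.1 σ
  -- Both sums become the same sum over `antidiagonal (n - 1)` after shifting `j` resp. `k`.
  have shifted : ∑ p ∈ antidiagonal n,
        sqrtCoeff p.1 * sqrtCoeff p.2 * (p.1 * (2 * p.2 - 1)) * σ ^ (p.1 - 1) * τ ^ p.2
      = ∑ p ∈ antidiagonal n,
        sqrtCoeff p.1 * sqrtCoeff p.2 * (p.2 * (2 * p.1 - 1)) * σ ^ p.1 * τ ^ (p.2 - 1) := by
    rcases n with _ | n
    · simp
    rw [Nat.sum_antidiagonal_succ, Nat.sum_antidiagonal_succ']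
    simp only [Nat.cast_zero, zero_mul, mul_zero, zero_add, Nat.cast_add, Nat.cast_one,
      Nat.add_sub_cancel]
    refine sum_congr rfl fun p _ => ?_
    linear_combination (σ ^ p.1 * τ ^ p.2) * sqrtCoeff_succ_mul_comm p.1 p.2
  rw [← sub_eq_zero, mul_sum, ← sum_sub_distrib, ← sum_sub_distrib, sum_congr rfl termwise,
    sum_sub_distrib, shifted, sub_self]

lemma sqrtBlock_mem_epdSolutions (n : ℕ) : sqrtBlock n ∈ epdSolutions :=
  ⟨fun σ τ => ∑ p ∈ antidiagonal n,
      sqrtCoeff p.1 * sqrtCoeff p.2 * (p.1 * σ ^ (p.1 - 1)) * τ ^ p.2,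
    fun σ τ => ∑ p ∈ antidiagonal n,
      sqrtCoeff p.1 * sqrtCoeff p.2 * σ ^ p.1 * (p.2 * τ ^ (p.2 - 1)),
    fun σ τ => ∑ p ∈ antidiagonal n,
      sqrtCoeff p.1 * sqrtCoeff p.2 * (p.1 * σ ^ (p.1 - 1)) * (p.2 * τ ^ (p.2 - 1)),
    fun σ _ => HasDerivAt.fun_sum fun _ _ => ((hasDerivAt_pow _ σ).const_mul _).mul_const _,
    fun _ τ => HasDerivAt.fun_sum fun _ _ => (hasDerivAt_pow _ τ).const_mul _,
    fun σ _ => HasDerivAt.fun_sum fun _ _ => ((hasDerivAt_pow _ σ).const_mul _).mul_const _,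
    sqrtBlock_epd n⟩

lemma EPDF_eq_sum_smul_sqrtBlock (d : ℕ) (g : ℕ → ℝ) (T : ℝ) :
    EPDF d g T = ∑ m ∈ Icc 1 d, ((m : ℝ) * g m) • sqrtBlock (m + 1)
      + (T / 2) • fun σ τ : ℝ => σ + τ := by
  ext σ τ
  simp only [EPDF, sqrtBlock, Nat.sum_antidiagonal_eq_sum_range_succ_mk, Pi.add_apply,
    Finset.sum_apply, Pi.smul_apply, smul_eq_mul]

/-- The function `F(σ,τ)` satisfies the Euler–Poisson–Darboux equation
`2(τ−σ) ∂²F/∂σ∂τ = ∂F/∂σ − ∂F/∂τ` identically in `σ, τ`. -/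
theorem euler_poisson_darboux (d : ℕ) (g : ℕ → ℝ) (T : ℝ) (σ τ : ℝ) :
    2 * (τ - σ) * deriv (fun s : ℝ => deriv (fun t : ℝ => EPDF d g T s t) τ) σ
      = deriv (fun s : ℝ => EPDF d g T s τ) σ - deriv (fun t : ℝ => EPDF d g T σ t) τ := by
  have hF : EPDF d g T ∈ epdSolutions := by
    rw [EPDF_eq_sum_smul_sqrtBlock]
    exact add_mem (sum_mem fun m _ => Submodule.smul_mem _ _ (sqrtBlock_mem_epdSolutions _))
      (Submodule.smul_mem _ _ fun_add_mem_epdSolutions)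
  exact epdSolutions.deriv_eq hF σ τ
end
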